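/- Set ψ(x) = φ(x,η(x)) and G(η)ψ(x) = φ_y(x,η(x)) − η'(x)φ_x(x,η(x)) and assume |η'(x)| ≤ 1 for all x. Then for every C¹ 2L-periodic function χ : ℝ → ℝ with χ ≥ 0, one has ∫_{−L}^{L} χ(x)·ψ'(x)² dx ≤ 8∫_{−L}^{L} χ(x)·(G(η)ψ(x))² dx + 4∫_{−L}^{L} χ(x)·φ_x(x,−h)² dx − 8∫_{−L}^{L}∫_{−h}^{η(x)} χ'(x)·φ_x(x,y)·φ_y(x,y) dy dx. -/

import Mathlib

/-!
Write `u = φₓ`, `v = φ_y` and `F x = ∫_{-h}^{η x} u v dy`. Harmonicity and the symmetry of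
second derivatives give `∂ₓ(u v) = ∂_y((u² - v²)/2)`, so, as `v = 0` on the bottom,
`F' = N(η)ψ - u(·,-h)²/2`. Multiplying by `χ` and integrating by parts over a period,
`∫ χ N(η)ψ = ½ ∫ χ u(·,-h)² - ∫ χ' F`. The theorem follows by integrating the pointwise bound
`(ψ')² = (u + η' v)² ≤ 8 (G(η)ψ)² + 8 N(η)ψ`, valid when `|η'| ≤ 1`.
-/

open Real Set MeasureTheory intervalIntegral

noncomputable section

def phiX (φ : ℝ → ℝ → ℝ) (x y : ℝ) : ℝ := deriv (fun x' => φ x' y) x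

def phiY (φ : ℝ → ℝ → ℝ) (x y : ℝ) : ℝ := deriv (fun y' => φ x y') y

/-- The Dirichlet-to-Neumann expression `G(η)ψ` in the stationary setting. -/
def DN (η : ℝ → ℝ) (φ : ℝ → ℝ → ℝ) (x : ℝ) : ℝ :=
  phiY φ x (η x) - deriv η x * phiX φ x (η x)

/-- The quadratic expression `N(η)ψ` in the stationary setting. -/
def NOp (η : ℝ → ℝ) (φ : ℝ → ℝ → ℝ) (x : ℝ) : ℝ :=
  1/2 * (phiX φ x (η x))^2 - 1/2 * (phiY φ x (η x))^2
    + deriv η x * phiX φ x (η x) * phiY φ x (η x)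

open Function ContinuousLinearMap Topology

section PartialDerivatives

variable {φ : ℝ → ℝ → ℝ}

lemma hasDerivAt_left_fderiv_uncurry (hφ : Differentiable ℝ (uncurry φ)) (x y : ℝ) :
    HasDerivAt (φ · y) (fderiv ℝ (uncurry φ) (x, y) (1, 0)) x := by
  exact (hφ (x, y)).hasFDerivAt.comp_hasDerivAt x ((hasDerivAt_id' x).prodMk (hasDerivAt_const x y))

lemma hasDerivAt_right_fderiv_uncurry (hφ : Differentiable ℝ (uncurry φ)) (x y : ℝ) :
    HasDerivAt (φ x ·) (fderiv ℝ (uncurry φ) (x, y) (0, 1)) y := by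
  exact (hφ (x, y)).hasFDerivAt.comp_hasDerivAt y ((hasDerivAt_const y x).prodMk (hasDerivAt_id' y))

lemma phiX_eq_fderiv (hφ : Differentiable ℝ (uncurry φ)) (x y : ℝ) :
    phiX φ x y = fderiv ℝ (uncurry φ) (x, y) (1, 0) :=
  (hasDerivAt_left_fderiv_uncurry hφ x y).deriv

lemma phiY_eq_fderiv (hφ : Differentiable ℝ (uncurry φ)) (x y : ℝ) :
    phiY φ x y = fderiv ℝ (uncurry φ) (x, y) (0, 1) :=
  (hasDerivAt_right_fderiv_uncurry hφ x y).deriv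

lemma hasDerivAt_phiX (hφ : Differentiable ℝ (uncurry φ)) (x y : ℝ) :
    HasDerivAt (φ · y) (phiX φ x y) x := by
  simpa only [phiX_eq_fderiv hφ] using hasDerivAt_left_fderiv_uncurry hφ x y

lemma hasDerivAt_phiY (hφ : Differentiable ℝ (uncurry φ)) (x y : ℝ) :
    HasDerivAt (φ x ·) (phiY φ x y) y := by
  simpa only [phiY_eq_fderiv hφ] using hasDerivAt_right_fderiv_uncurry hφ x y

lemma uncurry_phiX_eq_fderiv (hφ : Differentiable ℝ (uncurry φ)) :
    uncurry (phiX φ) = fun p => fderiv ℝ (uncurry φ) p (1, 0) :=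
  funext fun p => phiX_eq_fderiv hφ p.1 p.2

lemma uncurry_phiY_eq_fderiv (hφ : Differentiable ℝ (uncurry φ)) :
    uncurry (phiY φ) = fun p => fderiv ℝ (uncurry φ) p (0, 1) :=
  funext fun p => phiY_eq_fderiv hφ p.1 p.2

lemma hasDerivAt_comp_graph (hφ : Differentiable ℝ (uncurry φ)) {η : ℝ → ℝ} {η' x : ℝ}
    (hη : HasDerivAt η η' x) :
    HasDerivAt (fun x => φ x (η x)) (phiX φ x (η x) + η' * phiY φ x (η x)) x := by
  have hcomp := (hφ (x, η x)).hasFDerivAt.comp_hasDerivAt x ((hasDerivAt_id' x).prodMk hη)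
  have hsplit : ((1 : ℝ), η') = (1, 0) + η' • (0, 1) := by simp
  rw [hsplit, map_add, map_smul, ← phiX_eq_fderiv hφ, ← phiY_eq_fderiv hφ, smul_eq_mul] at hcomp
  exact hcomp

lemma periodic_phiX {T : ℝ} (hφ : ∀ y, Periodic (φ · y) T) (y : ℝ) :
    Periodic (phiX φ · y) T := fun x => by
  show phiX φ (x + T) y = phiX φ x y
  rw [phiX, phiX, ← deriv_comp_add_const]
  exact congrArg (deriv · x) (funext fun x' => hφ y x')

lemma periodic_phiY {T : ℝ} (hφ : ∀ y, Periodic (φ · y) T) (y : ℝ) :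
    Periodic (phiY φ · y) T := fun x => by
  show phiY φ (x + T) y = phiY φ x y
  rw [phiY, phiY]
  exact congrArg (deriv · y) (funext fun y' => hφ y' x)

variable {n : WithTop ℕ∞}

lemma contDiff_uncurry_phiX (hφ : ContDiff ℝ (n + 1) (uncurry φ)) :
    ContDiff ℝ n (uncurry (phiX φ)) := by
  rw [uncurry_phiX_eq_fderiv (hφ.differentiable (by simp))]
  exact (hφ.fderiv_right le_rfl).clm_apply contDiff_const

lemma contDiff_uncurry_phiY (hφ : ContDiff ℝ (n + 1) (uncurry φ)) :
    ContDiff ℝ n (uncurry (phiY φ)) := by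
  rw [uncurry_phiY_eq_fderiv (hφ.differentiable (by simp))]
  exact (hφ.fderiv_right le_rfl).clm_apply contDiff_const

lemma Continuous.phiX_comp {s : ℝ → ℝ} (hφ : ContDiff ℝ 1 (uncurry φ)) (hs : Continuous s) :
    Continuous fun x => phiX φ x (s x) :=
  (contDiff_uncurry_phiX (n := 0) hφ).continuous.comp (continuous_id.prodMk hs)

lemma Continuous.phiY_comp {s : ℝ → ℝ} (hφ : ContDiff ℝ 1 (uncurry φ)) (hs : Continuous s) :
    Continuous fun x => phiY φ x (s x) :=
  (contDiff_uncurry_phiY (n := 0) hφ).continuous.comp (continuous_id.prodMk hs)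

lemma phiX_phiY (hφ : ContDiff ℝ 2 (uncurry φ)) (x y : ℝ) :
    phiX (phiY φ) x y = phiY (phiX φ) x y := by
  have hD : Differentiable ℝ (fderiv ℝ (uncurry φ)) :=
    (hφ.fderiv_right (m := 1) le_rfl).differentiable one_ne_zero
  have hφ1 : Differentiable ℝ (uncurry φ) := hφ.differentiable two_ne_zero
  rw [phiX_eq_fderiv ((contDiff_uncurry_phiY (n := 1) hφ).differentiable one_ne_zero),
    phiY_eq_fderiv ((contDiff_uncurry_phiX (n := 1) hφ).differentiable one_ne_zero),
    uncurry_phiX_eq_fderiv hφ1, uncurry_phiY_eq_fderiv hφ1,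
    fderiv_clm_apply (hD _) (differentiableAt_const _),
    fderiv_clm_apply (hD _) (differentiableAt_const _)]
  simpa using ((hφ.contDiffAt (x := (x, y))).isSymmSndFDerivAt (by simp)) (1, 0) (0, 1)

end PartialDerivatives

section ParametricIntegral

variable {g : ℝ → ℝ → ℝ}

lemma hasDerivAt_intervalIntegral_param (hg : ContDiff ℝ 1 (uncurry g)) (a b x₀ : ℝ) :
    HasDerivAt (fun x => ∫ y in a..b, g x y) (∫ y in a..b, phiX g x₀ y) x₀ := by
  have hgc : Continuous (uncurry g) := hg.continuous
  have hg'c : Continuous (uncurry (phiX g)) := (contDiff_uncurry_phiX (n := 0) hg).continuous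
  obtain ⟨M, hM⟩ := (isCompact_Icc (a := x₀ - 1) (b := x₀ + 1)).prod
    (isCompact_uIcc (a := a) (b := b)) |>.exists_bound_of_continuousOn hg'c.continuousOn
  have hball : Metric.ball x₀ 1 ⊆ Icc (x₀ - 1) (x₀ + 1) := by
    rw [Real.ball_eq_Ioo]; exact Ioo_subset_Icc_self
  refine (hasDerivAt_integral_of_dominated_loc_of_deriv_le (bound := fun _ => M)
    (Metric.ball_mem_nhds x₀ one_pos) ?_ ?_ ?_ ?_ intervalIntegrable_const ?_).2
  · exact .of_forall fun x => (hgc.uncurry_left x).aestronglyMeasurable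
  · exact (hgc.uncurry_left x₀).intervalIntegrable _ _
  · exact (hg'c.uncurry_left x₀).aestronglyMeasurable
  · exact .of_forall fun y hy x hx => hM (x, y) ⟨hball hx, uIoc_subset_uIcc hy⟩
  · exact .of_forall fun y _ x _ => hasDerivAt_phiX (hg.differentiable one_ne_zero) x y

lemma hasDerivAt_intervalIntegral_param_upper (hg : ContDiff ℝ 1 (uncurry g)) (a : ℝ)
    {s : ℝ → ℝ} {s' x₀ : ℝ} (hs : HasDerivAt s s' x₀) :
    HasDerivAt (fun x => ∫ y in a..s x, g x y)
      ((∫ y in a..s x₀, phiX g x₀ y) + s' * g x₀ (s x₀)) x₀ := by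
  have hgc : Continuous (uncurry g) := hg.continuous
  have hgx : Continuous (uncurry (phiX g)) := (contDiff_uncurry_phiX (n := 0) hg).continuous
  have df₁ : ∀ᶠ p in 𝓝 (x₀, s x₀), HasFDerivAt (fun x => ∫ y in a..p.2, g x y)
      (toSpanSingleton ℝ (∫ y in a..p.2, phiX g p.1 y)) p.1 :=
    .of_forall fun p => (hasDerivAt_intervalIntegral_param hg a p.2 p.1).hasFDerivAt
  have df₂ : ∀ᶠ p in 𝓝 (x₀, s x₀), HasFDerivAt (fun t => ∫ y in a..t, g p.1 y)
      (toSpanSingleton ℝ (g p.1 p.2)) p.2 :=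
    .of_forall fun p => (integral_hasDerivAt_right ((hgc.uncurry_left p.1).intervalIntegrable _ _)
      ((hgc.uncurry_left p.1).stronglyMeasurableAtFilter _ _)
      (hgc.uncurry_left p.1).continuousAt).hasFDerivAt
  have cf₁ : ContinuousAt (fun p : ℝ × ℝ => toSpanSingleton ℝ (∫ y in a..p.2, phiX g p.1 y))
      (x₀, s x₀) :=
    toSpanSingletonCLE.continuous.comp
      (continuous_parametric_primitive_of_continuous hgx) |>.continuousAt
  have cf₂ : ContinuousAt (fun p : ℝ × ℝ => toSpanSingleton ℝ (g p.1 p.2)) (x₀, s x₀) :=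
    (toSpanSingletonCLE.continuous.comp hgc).continuousAt
  have hG := hasStrictFDerivAt_uncurry_coprod (f := fun x t => ∫ y in a..t, g x y)
    (f₁ := fun x t => toSpanSingleton ℝ (∫ y in a..t, phiX g x y))
    (f₂ := fun x t => toSpanSingleton ℝ (g x t)) df₁ df₂ cf₁ cf₂
  refine (hG.hasFDerivAt.comp_hasDerivAt x₀ ((hasDerivAt_id' x₀).prodMk hs)).congr_deriv ?_
  simp [Function.HasUncurry.uncurry]

end ParametricIntegral

lemma integral_mul_deriv_of_periodic {u v u' v' : ℝ → ℝ} {T : ℝ} (hu : Periodic u T)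
    (hv : Periodic v T) (huu' : ∀ x, HasDerivAt u (u' x) x) (hvv' : ∀ x, HasDerivAt v (v' x) x)
    (hu' : Continuous u') (hv' : Continuous v') (a : ℝ) :
    ∫ x in a..a + T, u x * v' x = - ∫ x in a..a + T, u' x * v x := by
  rw [integral_mul_deriv_eq_deriv_mul (fun x _ => huu' x) (fun x _ => hvv' x)
    (hu'.intervalIntegrable _ _) (hv'.intervalIntegrable _ _), hu a, hv a]
  ring

/-- The difference of the two sides is `(3 + 8m²)a² - 10mab + (4 - m²)b²`, a positive
semidefinite form as soon as `m² ≤ 3/2`. -/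
lemma sq_add_mul_le (a b m : ℝ) (hm : |m| ≤ 1) :
    (a + m * b) ^ 2 ≤ 8 * (b - m * a) ^ 2 + 8 * (1/2 * a ^ 2 - 1/2 * b ^ 2 + m * a * b) := by
  have hm2 : m ^ 2 ≤ 1 := by nlinarith [sq_abs m, abs_nonneg m]
  nlinarith [sq_nonneg ((3 + 8 * m ^ 2) * a - 5 * m * b), sq_nonneg b, sq_nonneg (m * b),
    sq_nonneg (m * a - b), sq_nonneg (m * a + b), sq_nonneg a,
    mul_nonneg (sub_nonneg.2 hm2) (sq_nonneg b)]

section Flux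

variable {φ : ℝ → ℝ → ℝ} {η : ℝ → ℝ}

lemma sq_phiX_add_mul_phiY_le {x : ℝ} (hslope : |deriv η x| ≤ 1) :
    (phiX φ x (η x) + deriv η x * phiY φ x (η x)) ^ 2 ≤ 8 * DN η φ x ^ 2 + 8 * NOp η φ x := by
  simpa only [DN, NOp] using sq_add_mul_le (phiX φ x (η x)) (phiY φ x (η x)) _ hslope

lemma continuous_DN (hφ : ContDiff ℝ 1 (uncurry φ)) (hη : ContDiff ℝ 1 η) :
    Continuous (DN η φ) :=
  (hη.continuous.phiY_comp hφ).sub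
    ((hη.continuous_deriv le_rfl).mul (hη.continuous.phiX_comp hφ))

lemma continuous_NOp (hφ : ContDiff ℝ 1 (uncurry φ)) (hη : ContDiff ℝ 1 η) :
    Continuous (NOp η φ) := by
  have hu := hη.continuous.phiX_comp hφ
  have hv := hη.continuous.phiY_comp hφ
  exact ((continuous_const.mul (hu.pow 2)).sub (continuous_const.mul (hv.pow 2))).add
    (((hη.continuous_deriv le_rfl).mul hu).mul hv)

lemma hasDerivAt_half_phiX_sq_sub_half_phiY_sq (hφ : ContDiff ℝ 2 (uncurry φ)) {x y : ℝ}
    (hΔ : phiX (phiX φ) x y + phiY (phiY φ) x y = 0) :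
    HasDerivAt (fun y => 1/2 * phiX φ x y ^ 2 - 1/2 * phiY φ x y ^ 2)
      (phiX (fun x y => phiX φ x y * phiY φ x y) x y) y := by
  have hu := (contDiff_uncurry_phiX (n := 1) hφ).differentiable one_ne_zero
  have hv := (contDiff_uncurry_phiY (n := 1) hφ).differentiable one_ne_zero
  have hprod : phiX (fun x y => phiX φ x y * phiY φ x y) x y
      = phiX (phiX φ) x y * phiY φ x y + phiX φ x y * phiX (phiY φ) x y :=
    ((hasDerivAt_phiX hu x y).mul (hasDerivAt_phiX hv x y)).deriv
  rw [hprod, phiX_phiY hφ, show phiX (phiX φ) x y = - phiY (phiY φ) x y by linarith]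
  refine ((((hasDerivAt_phiY hu x y).fun_pow 2).const_mul (1/2 : ℝ)).sub
    (((hasDerivAt_phiY hv x y).fun_pow 2).const_mul (1/2 : ℝ))).congr_deriv ?_
  simp only [Nat.cast_ofNat]
  ring

lemma integral_phiX_mul_phiY_deriv (hφ : ContDiff ℝ 2 (uncurry φ)) {x a b : ℝ} (hab : a ≤ b)
    (hΔ : ∀ y ∈ Ioo a b, phiX (phiX φ) x y + phiY (phiY φ) x y = 0) :
    ∫ y in a..b, phiX (fun x y => phiX φ x y * phiY φ x y) x y
      = (1/2 * phiX φ x b ^ 2 - 1/2 * phiY φ x b ^ 2)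
        - (1/2 * phiX φ x a ^ 2 - 1/2 * phiY φ x a ^ 2) := by
  have hu := contDiff_uncurry_phiX (n := 1) hφ
  have hv := contDiff_uncurry_phiY (n := 1) hφ
  have huv : ContDiff ℝ 1 (uncurry fun x y => phiX φ x y * phiY φ x y) := hu.mul hv
  refine integral_eq_sub_of_hasDerivAt_of_le hab (Continuous.continuousOn ?_)
    (fun y hy => hasDerivAt_half_phiX_sq_sub_half_phiY_sq hφ (hΔ y hy))
    (((contDiff_uncurry_phiX (n := 0) huv).continuous.uncurry_left x).intervalIntegrable _ _)
  have hux := hu.continuous.uncurry_left x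
  have hvx := hv.continuous.uncurry_left x
  fun_prop

variable {h : ℝ}

lemma hasDerivAt_integral_phiX_mul_phiY (hφ : ContDiff ℝ 2 (uncurry φ)) {x : ℝ}
    (hη : DifferentiableAt ℝ η x) (hηh : -h ≤ η x)
    (hΔ : ∀ y ∈ Ioo (-h) (η x), phiX (phiX φ) x y + phiY (phiY φ) x y = 0)
    (hbot : phiY φ x (-h) = 0) :
    HasDerivAt (fun x => ∫ y in (-h)..η x, phiX φ x y * phiY φ x y)
      (NOp η φ x - 1/2 * phiX φ x (-h) ^ 2) x := by
  have huv : ContDiff ℝ 1 (uncurry fun x y => phiX φ x y * phiY φ x y) :=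
    (contDiff_uncurry_phiX hφ).mul (contDiff_uncurry_phiY hφ)
  refine (hasDerivAt_intervalIntegral_param_upper huv (-h) hη.hasDerivAt).congr_deriv ?_
  rw [integral_phiX_mul_phiY_deriv hφ hηh hΔ, hbot, NOp]
  ring

lemma integral_mul_NOp_eq {L : ℝ} (hφ : ContDiff ℝ 2 (uncurry φ))
    (hφper : ∀ y, Periodic (φ · y) (2 * L)) (hη : ContDiff ℝ 1 η) (hηper : Periodic η (2 * L))
    (hηh : ∀ x, -h ≤ η x)
    (hΔ : ∀ x, ∀ y ∈ Ioo (-h) (η x), phiX (phiX φ) x y + phiY (phiY φ) x y = 0)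
    (hbot : ∀ x, phiY φ x (-h) = 0) {χ : ℝ → ℝ} (hχ : ContDiff ℝ 1 χ)
    (hχper : Periodic χ (2 * L)) :
    ∫ x in (-L)..L, χ x * NOp η φ x
      = 1/2 * (∫ x in (-L)..L, χ x * phiX φ x (-h) ^ 2)
        - ∫ x in (-L)..L, ∫ y in (-h)..η x, deriv χ x * phiX φ x y * phiY φ x y := by
  set F := fun x => ∫ y in (-h)..η x, phiX φ x y * phiY φ x y
  have hφ1 : ContDiff ℝ 1 (uncurry φ) := hφ.of_le one_le_two
  have hF : ∀ x, HasDerivAt F (NOp η φ x - 1/2 * phiX φ x (-h) ^ 2) x := fun x =>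
    hasDerivAt_integral_phiX_mul_phiY hφ (hη.differentiable one_ne_zero x) (hηh x) (hΔ x) (hbot x)
  have hFper : Periodic F (2 * L) := fun x => by
    have hu y : phiX φ (x + 2 * L) y = phiX φ x y := periodic_phiX hφper y x
    have hv y : phiY φ (x + 2 * L) y = phiY φ x y := periodic_phiY hφper y x
    simp only [F, hηper x, hu, hv]
  have hub : Continuous fun x => phiX φ x (-h) := continuous_const.phiX_comp hφ1
  have hibp := integral_mul_deriv_of_periodic hχper hFper
    (fun x => (hχ.differentiable one_ne_zero x).hasDerivAt) hF (hχ.continuous_deriv le_rfl)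
    ((continuous_NOp hφ1 hη).sub (continuous_const.mul (hub.pow 2))) (-L)
  rw [show -L + 2 * L = L by ring] at hibp
  have hsplit : ∫ x in (-L)..L, χ x * NOp η φ x
      = (∫ x in (-L)..L, χ x * (NOp η φ x - 1/2 * phiX φ x (-h) ^ 2))
        + 1/2 * ∫ x in (-L)..L, χ x * phiX φ x (-h) ^ 2 := by
    rw [← intervalIntegral.integral_const_mul, ← intervalIntegral.integral_add]
    · exact integral_congr fun x _ => by ring
    · exact (hχ.continuous.mul ((continuous_NOp hφ1 hη).sub
        (continuous_const.mul (hub.pow 2)))).intervalIntegrable _ _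
    · exact (continuous_const.mul (hχ.continuous.mul (hub.pow 2))).intervalIntegrable _ _
  have hbulk : ∫ x in (-L)..L, ∫ y in (-h)..η x, deriv χ x * phiX φ x y * phiY φ x y
      = ∫ x in (-L)..L, deriv χ x * F x :=
    integral_congr fun x _ => by simp only [F, ← intervalIntegral.integral_const_mul, mul_assoc]
  rw [hsplit, hibp, hbulk]
  ring

end Flux

theorem trace_inequality_general
    (L h : ℝ) (hL : 0 < L) (hh : 0 < h)
    (η : ℝ → ℝ) (hη : ContDiff ℝ 2 η) (hηper : ∀ x, η (x + 2*L) = η x)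
    (hηlb : ∀ x, -h/2 ≤ η x)
    (hslope : ∀ x, |deriv η x| ≤ 1)
    (φ : ℝ → ℝ → ℝ) (hφ : ContDiff ℝ 2 (Function.uncurry φ))
    (hφper : ∀ x y, φ (x + 2*L) y = φ x y)
    (hharm : ∀ x y : ℝ, -h < y → y < η x →
        deriv (fun x' => phiX φ x' y) x + deriv (fun y' => phiY φ x y') y = 0)
    (hbot : ∀ x : ℝ, phiY φ x (-h) = 0)
    (ψ : ℝ → ℝ) (hψ : ∀ x, ψ x = φ x (η x))
    (χ : ℝ → ℝ) (hχ : ContDiff ℝ 1 χ) (hχper : ∀ x, χ (x + 2*L) = χ x)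
    (hχpos : ∀ x, 0 ≤ χ x) :
    (∫ x in (-L)..L, χ x * (deriv ψ x)^2)
    ≤ 8 * (∫ x in (-L)..L, χ x * (DN η φ x)^2)
      + 4 * (∫ x in (-L)..L, χ x * (phiX φ x (-h))^2)
      - 8 * (∫ x in (-L)..L, ∫ y in (-h)..(η x), deriv χ x * phiX φ x y * phiY φ x y) := by
  have hφ1 : ContDiff ℝ 1 (uncurry φ) := hφ.of_le one_le_two
  have hη1 : ContDiff ℝ 1 η := hη.of_le one_le_two
  have hψ' : deriv ψ = fun x => phiX φ x (η x) + deriv η x * phiY φ x (η x) := by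
    rw [funext hψ]
    exact funext fun x => (hasDerivAt_comp_graph (hφ1.differentiable one_ne_zero)
      (hη1.differentiable one_ne_zero x).hasDerivAt).deriv
  have hψ'c : Continuous (deriv ψ) :=
    hψ' ▸ (hη1.continuous.phiX_comp hφ1).add
      ((hη1.continuous_deriv le_rfl).mul (hη1.continuous.phiY_comp hφ1))
  have hDN : IntervalIntegrable (fun x => χ x * DN η φ x ^ 2) volume (-L) L :=
    (hχ.continuous.mul ((continuous_DN hφ1 hη1).pow 2)).intervalIntegrable _ _
  have hN : IntervalIntegrable (fun x => χ x * NOp η φ x) volume (-L) L :=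
    (hχ.continuous.mul (continuous_NOp hφ1 hη1)).intervalIntegrable _ _
  calc ∫ x in (-L)..L, χ x * deriv ψ x ^ 2
      ≤ ∫ x in (-L)..L, 8 * (χ x * DN η φ x ^ 2) + 8 * (χ x * NOp η φ x) :=
        integral_mono_on (by linarith) ((hχ.continuous.mul (hψ'c.pow 2)).intervalIntegrable _ _)
          ((hDN.const_mul 8).add (hN.const_mul 8)) fun x _ => by
            simp only [hψ']
            linarith [mul_le_mul_of_nonneg_left
              (sq_phiX_add_mul_phiY_le (φ := φ) (hslope x)) (hχpos x)]
    _ = 8 * (∫ x in (-L)..L, χ x * DN η φ x ^ 2) + 8 * ∫ x in (-L)..L, χ x * NOp η φ x := by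
        rw [intervalIntegral.integral_add (hDN.const_mul 8) (hN.const_mul 8),
          intervalIntegral.integral_const_mul, intervalIntegral.integral_const_mul]
    _ = _ := by
        rw [integral_mul_NOp_eq hφ (fun y x => hφper x y) hη1 hηper
          (fun x => by linarith [hηlb x]) (fun x y hy => hharm x y hy.1 hy.2) hbot hχ hχper]
        ring

/-- the trace inequality (d11) of the paper, bounding `ψₓ` by `G(η)ψ`. -/
theorem trace_inequality
    (L h : ℝ) (hL : 0 < L) (hh : 0 < h)
    (η : ℝ → ℝ) (hη : ContDiff ℝ 2 η) (hηper : ∀ x, η (x + 2*L) = η x)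
    (hηeven : ∀ x, η (-x) = η x) (hηlb : ∀ x, -h/2 ≤ η x)
    (hslope : ∀ x, |deriv η x| ≤ 1)
    (φ : ℝ → ℝ → ℝ) (hφ : ContDiff ℝ 2 (Function.uncurry φ))
    (hφper : ∀ x y, φ (x + 2*L) y = φ x y) (hφeven : ∀ x y, φ (-x) y = φ x y)
    (hharm : ∀ x y : ℝ, -h < y → y < η x →
        deriv (fun x' => phiX φ x' y) x + deriv (fun y' => phiY φ x y') y = 0)
    (hbot : ∀ x : ℝ, phiY φ x (-h) = 0)
    (ψ : ℝ → ℝ) (hψ : ∀ x, ψ x = φ x (η x))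
    (χ : ℝ → ℝ) (hχ : ContDiff ℝ 1 χ) (hχper : ∀ x, χ (x + 2*L) = χ x)
    (hχpos : ∀ x, 0 ≤ χ x) :
    (∫ x in (-L)..L, χ x * (deriv ψ x)^2)
    ≤ 8 * (∫ x in (-L)..L, χ x * (DN η φ x)^2)
      + 4 * (∫ x in (-L)..L, χ x * (phiX φ x (-h))^2)
      - 8 * (∫ x in (-L)..L, ∫ y in (-h)..(η x), deriv χ x * phiX φ x y * phiY φ x y) :=
  trace_inequality_general L h hL hh η hη hηper hηlb hslope φ hφ hφper hharm hbot ψ hψ χ hχ hχper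
    hχpos
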